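/- Let (X_t)_{t∈ℤ} be a stationary time series all of whose finite-dimensional distributions are continuous, let d ∈ ℕ, X̄_t = (X_t,…,X_{t+d−1}), and p ≥ 1. Then the kernel h(x,y) = 1{Π(x)=Π(y)} is p-continuous with respect to (X̄_t): with φ(ε) := 2^p · P(ms(X̄_1) ≤ 2ε) one has φ(ε) → 0 as ε → 0, and E(|h(U,V) − h(Ũ,V)|^p · 1{‖U−Ũ‖_1 ≤ ε}) ≤ φ(ε) for all random vectors U, Ũ, V with marginal law F = law(X̄_0) such that (U,V) has law F×F or the law of (X̄_0, X̄_t) for some t ≥ 1. -/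

import Mathlib

open MeasureTheory ProbabilityTheory Filter
open scoped Classical

noncomputable section

/-- The ordinal pattern of a vector `x ∈ ℝ^d`: the permutation `π` with
`π j < π k ↔ (x j < x k ∨ (x j = x k ∧ j < k))` (ranks, ties broken by index).
`Tuple.sort` sorts the graph of `x` lexicographically, so its inverse assigns ranks. -/
def pattern {d : ℕ} (x : Fin d → ℝ) : Equiv.Perm (Fin d) := (Tuple.sort x)⁻¹

/-- The minimal spread of a vector: the smallest distance between two distinct entries. -/
def minSpread {d : ℕ} (x : Fin d → ℝ) : ℝ :=
  sInf {r : ℝ | ∃ j k : Fin d, j ≠ k ∧ r = |x j - x k|}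

/-- The sliding window `X̄_t = (X_t, …, X_{t+d-1})`. -/
def window {Ω : Type*} (X : ℤ → Ω → ℝ) (d : ℕ) (t : ℤ) (ω : Ω) : Fin d → ℝ :=
  fun i => X (t + (i : ℕ)) ω

/-- A stationary time series. -/
def Stationary {Ω : Type*} [MeasurableSpace Ω] (μ : Measure Ω) (X : ℤ → Ω → ℝ) : Prop :=
  ∀ t : ℤ, Measure.map (fun ω => fun s : ℤ => X (s + t) ω) μ
    = Measure.map (fun ω => fun s : ℤ => X s ω) μ

/-! If `Π(U) ≠ Π(Ũ)`, some pair of coordinates is ordered differently in `U` and in `Ũ`, so these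
two coordinates of `U` are within `‖U - Ũ‖₁` of each other. Hence the integrand is at most
`1{ms(U) ≤ ε}`, whose expectation is `P(ms(X̄_1) ≤ ε)` by stationarity. Continuity of the
finite-dimensional distributions gives `P(ms(X̄_1) = 0) = 0`, so `φ(ε) → 0` by right-continuity of
the distribution function of `ms(X̄_1)`. -/

open Set
open scoped Topology

section OrdinalPattern

variable {d : ℕ}

lemma pattern_eq_of_forall_le_imp_lt {x y : Fin d → ℝ}
    (H : ∀ j k, j ≠ k → x j ≤ x k → y j < y k) : pattern x = pattern y := by
  have hx_inj : Function.Injective x := fun j k hjk => by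
    by_contra hne
    exact (H j k hne hjk.le).asymm (H k j (Ne.symm hne) hjk.ge)
  -- `sort y` also sorts `x`: an inversion of `x ∘ sort y` would be one of `y ∘ sort y`.
  have hsort : Tuple.sort y = Tuple.sort x := by
    refine Tuple.eq_sort_iff.2 ⟨fun i j hij => ?_, fun i j hij he => ?_⟩
    · by_contra! hlt
      have hne : Tuple.sort y j ≠ Tuple.sort y i := fun e => hlt.ne (congrArg x e)
      exact (H _ _ hne hlt.le).not_ge (Tuple.monotone_sort y hij)
    · exact absurd ((Tuple.sort y).injective (hx_inj he)) hij.ne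
  rw [pattern, pattern, hsort]

lemma exists_pair_of_pattern_ne {x y : Fin d → ℝ} (h : pattern x ≠ pattern y) :
    ∃ j k, j ≠ k ∧ x j ≤ x k ∧ y k ≤ y j := by
  by_contra! hc
  exact h (pattern_eq_of_forall_le_imp_lt hc)

end OrdinalPattern

section MinSpread

variable {d : ℕ}

lemma minSpread_le_iff (hd : 2 ≤ d) (x : Fin d → ℝ) (c : ℝ) :
    minSpread x ≤ c ↔ ∃ j k, j ≠ k ∧ |x j - x k| ≤ c := by
  set S : Set ℝ := {r | ∃ j k : Fin d, j ≠ k ∧ r = |x j - x k|}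
  have hS_fin : S.Finite :=
    (finite_range fun jk : Fin d × Fin d => |x jk.1 - x jk.2|).subset
      fun r ⟨j, k, _, hr⟩ => ⟨(j, k), hr.symm⟩
  have hS_ne : S.Nonempty :=
    ⟨_, ⟨0, by omega⟩, ⟨1, by omega⟩, by simp [Fin.ext_iff], rfl⟩
  constructor
  · intro h
    obtain ⟨j, k, hjk, hr⟩ := hS_ne.csInf_mem hS_fin
    exact ⟨j, k, hjk, hr ▸ h⟩
  · rintro ⟨j, k, hjk, hle⟩
    exact (csInf_le hS_fin.bddBelow ⟨j, k, hjk, rfl⟩).trans hle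

lemma measurableSet_minSpread_le (hd : 2 ≤ d) (c : ℝ) :
    MeasurableSet {x : Fin d → ℝ | minSpread x ≤ c} := by
  have : {x : Fin d → ℝ | minSpread x ≤ c}
      = ⋃ (j : Fin d) (k : Fin d) (_ : j ≠ k), {x | |x j - x k| ≤ c} := by
    ext x
    simp [minSpread_le_iff hd]
  rw [this]
  exact .iUnion fun j => .iUnion fun k => .iUnion fun _ =>
    measurableSet_le (by fun_prop) measurable_const

lemma minSpread_le_of_pattern_ne (hd : 2 ≤ d) {x y : Fin d → ℝ} {ε : ℝ}
    (h : pattern x ≠ pattern y) (hxy : ∑ i, |x i - y i| ≤ ε) : minSpread x ≤ ε := by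
  obtain ⟨j, k, hjk, hx, hy⟩ := exists_pair_of_pattern_ne h
  have hpair : |x j - y j| + |x k - y k| ≤ ε :=
    calc |x j - y j| + |x k - y k| = ∑ i ∈ {j, k}, |x i - y i| := by rw [Finset.sum_pair hjk]
      _ ≤ ∑ i, |x i - y i| :=
        Finset.sum_le_sum_of_subset_of_nonneg (Finset.subset_univ _) fun i _ _ => abs_nonneg _
      _ ≤ ε := hxy
  refine (minSpread_le_iff hd x _).2 ⟨j, k, hjk, ?_⟩
  -- `x k - x j = (x k - y k) + (y k - y j) + (y j - x j)` and the middle term is `≤ 0`.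
  rw [abs_sub_comm, abs_of_nonneg (sub_nonneg.2 hx)]
  linarith [le_abs_self (x k - y k), neg_abs_le (x j - y j)]

end MinSpread

lemma Stationary.map_window {Ω : Type*} [MeasurableSpace Ω] {μ : Measure Ω} {X : ℤ → Ω → ℝ}
    (hstat : Stationary μ X) (hX : ∀ t, Measurable (X t)) (d : ℕ) (t : ℤ) :
    μ.map (window X d t) = μ.map (window X d 0) := by
  let restrict : (ℤ → ℝ) → Fin d → ℝ := fun f i => f i
  have h_restrict : Measurable restrict := by fun_prop
  have h_shift (s : ℤ) : Measurable fun ω (u : ℤ) => X (u + s) ω := by fun_prop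
  have h_window (s : ℤ) : window X d s = restrict ∘ fun ω (u : ℤ) => X (u + s) ω := by
    funext ω i
    simp [window, restrict, add_comm]
  rw [h_window, h_window, ← Measure.map_map h_restrict (h_shift t),
    ← Measure.map_map h_restrict (h_shift 0), hstat t, hstat 0]

lemma measure_minSpread_window_nonpos {Ω : Type*} [MeasurableSpace Ω] {μ : Measure Ω}
    {X : ℤ → Ω → ℝ} (hcont : ∀ i j : ℤ, i ≠ j → μ {ω | X i ω = X j ω} = 0)
    {d : ℕ} (hd : 2 ≤ d) (t : ℤ) : μ {ω | minSpread (window X d t ω) ≤ 0} = 0 := by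
  have hsub : {ω | minSpread (window X d t ω) ≤ 0}
      ⊆ ⋃ (j : Fin d) (k : Fin d) (_ : j ≠ k), {ω | X (t + j) ω = X (t + k) ω} := by
    intro ω hω
    obtain ⟨j, k, hjk, habs⟩ := (minSpread_le_iff hd _ 0).1 hω
    simp only [mem_iUnion]
    exact ⟨j, k, hjk, sub_eq_zero.1 (abs_nonpos_iff.1 habs)⟩
  refine measure_mono_null hsub <| measure_iUnion_null fun j => measure_iUnion_null fun k =>
    measure_iUnion_null fun hjk => hcont _ _ ?_
  simpa [Fin.ext_iff] using hjk

lemma tendsto_measure_setOf_le_nhdsGT {α : Type*} [MeasurableSpace α] (μ : Measure α)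
    [IsFiniteMeasure μ] {f : α → ℝ} (hf : ∀ c, MeasurableSet {x | f x ≤ c}) (a : ℝ) :
    Tendsto (fun c => μ {x | f x ≤ c}) (𝓝[>] a) (𝓝 (μ {x | f x ≤ a})) := by
  have h := tendsto_measure_biInter_gt (μ := μ) (s := fun c => {x | f x ≤ c}) (a := a)
    (fun r _ => (hf r).nullMeasurableSet) (fun _ _ _ hij _ hx => le_trans hx hij)
    ⟨a + 1, by linarith, measure_ne_top _ _⟩
  have h_inter : ⋂ r > a, {x | f x ≤ r} = {x | f x ≤ a} := by
    ext x
    simp [forall_gt_imp_ge_iff_le_of_dense]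
  rwa [h_inter] at h

lemma measurable_window {Ω : Type*} [MeasurableSpace Ω] {X : ℤ → Ω → ℝ}
    (hX : ∀ t, Measurable (X t)) (d : ℕ) (t : ℤ) : Measurable (window X d t) := by
  unfold window
  fun_prop

lemma tendsto_measureReal_minSpread_window_le_nhdsGT {Ω : Type*} [MeasurableSpace Ω]
    {μ : Measure Ω} [IsFiniteMeasure μ] {X : ℤ → Ω → ℝ} (hX : ∀ t, Measurable (X t))
    (hcont : ∀ i j : ℤ, i ≠ j → μ {ω | X i ω = X j ω} = 0) {d : ℕ} (hd : 2 ≤ d) (t : ℤ) :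
    Tendsto (fun c => μ.real {ω | minSpread (window X d t ω) ≤ c}) (𝓝[>] 0) (𝓝 0) := by
  have h := tendsto_measure_setOf_le_nhdsGT μ
    (fun c => measurable_window hX d t (measurableSet_minSpread_le hd c)) 0
  rw [measure_minSpread_window_nonpos hcont hd] at h
  exact (ENNReal.tendsto_toReal ENNReal.zero_ne_top).comp h

section PatternKernel

variable {d : ℕ}

lemma abs_sub_ite_pattern_rpow_mul_le_indicator (hd : 2 ≤ d) {p : ℝ} (hp : 0 < p)
    (x y z : Fin d → ℝ) (ε : ℝ) :
    |(if pattern x = pattern z then (1 : ℝ) else 0)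
        - (if pattern y = pattern z then (1 : ℝ) else 0)| ^ p
      * (if ∑ i, |x i - y i| ≤ ε then (1 : ℝ) else 0)
      ≤ {x | minSpread x ≤ ε}.indicator 1 x := by
  have h_ind : 0 ≤ {x | minSpread x ≤ ε}.indicator (1 : (Fin d → ℝ) → ℝ) x :=
    indicator_nonneg (fun _ _ => zero_le_one) x
  by_cases hxy : pattern x = pattern y
  · rwa [hxy, sub_self, abs_zero, Real.zero_rpow hp.ne', zero_mul]
  by_cases hsum : ∑ i, |x i - y i| ≤ ε
  · have hx : x ∈ {x | minSpread x ≤ ε} := minSpread_le_of_pattern_ne hd hxy hsum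
    rw [if_pos hsum, indicator_of_mem hx, Pi.one_apply, mul_one]
    exact Real.rpow_le_one (abs_nonneg _) (by split_ifs <;> norm_num) hp.le
  · rwa [if_neg hsum, mul_zero]

lemma integral_abs_sub_ite_pattern_rpow_mul_le (hd : 2 ≤ d) {p : ℝ} (hp : 0 < p)
    {Ω : Type*} [MeasurableSpace Ω] (μ : Measure Ω) [IsFiniteMeasure μ]
    {U Ut V : Ω → Fin d → ℝ} (hU : Measurable U) (ε : ℝ) :
    ∫ ω, |(if pattern (U ω) = pattern (V ω) then (1 : ℝ) else 0)
          - (if pattern (Ut ω) = pattern (V ω) then (1 : ℝ) else 0)| ^ p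
        * (if (∑ i, |U ω i - Ut ω i|) ≤ ε then (1 : ℝ) else 0) ∂μ
      ≤ (μ.map U).real {x | minSpread x ≤ ε} := by
  have hA := measurableSet_minSpread_le hd ε
  calc _ ≤ ∫ ω, {x | minSpread x ≤ ε}.indicator 1 (U ω) ∂μ := by
        refine integral_mono_of_nonneg (ae_of_all _ fun ω => ?_) ?_
          (ae_of_all _ fun ω => abs_sub_ite_pattern_rpow_mul_le_indicator hd hp _ _ _ ε)
        · exact mul_nonneg (Real.rpow_nonneg (abs_nonneg _) p) (by split_ifs <;> norm_num)
        · exact ((integrable_const (1 : ℝ)).indicator hA).comp_measurable hU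
    _ = (μ.map U).real {x | minSpread x ≤ ε} := by
        rw [← integral_map hU.aemeasurable (by fun_prop), integral_indicator_one hA]

end PatternKernel

/-- For a stationary time series with continuous finite-dimensional
distributions (no ties: `P(X_i = X_j) = 0` for `i ≠ j`), the kernel
`h(x,y) = 1{Π(x) = Π(y)}` is `p`-continuous with modulus `φ(ε) = 2^p · P(ms(X̄_1) ≤ 2ε)`:
`φ(ε) → 0` as `ε ↓ 0`, and `E(|h(U,V) − h(Ũ,V)|^p · 1{‖U−Ũ‖₁ ≤ ε}) ≤ φ(ε)` for all random
vectors `U, Ũ, V` with marginal law `F = law(X̄_0)` such that `(U,V)` has law `F × F` or the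
law of `(X̄_0, X̄_t)` for some `t ≥ 1`. -/
theorem stmt_2 {Ω : Type*} [MeasurableSpace Ω] (μ : Measure Ω) [IsProbabilityMeasure μ]
    (X : ℤ → Ω → ℝ) (hXmeas : ∀ t, Measurable (X t)) (hstat : Stationary μ X)
    (hcont : ∀ i j : ℤ, i ≠ j → μ {ω | X i ω = X j ω} = 0)
    (d : ℕ) (hd : 2 ≤ d) (p : ℝ) (hp : 1 ≤ p)
    (φ : ℝ → ℝ)
    (hφ : ∀ ε : ℝ, φ ε = 2 ^ p * (μ {ω | minSpread (window X d 1 ω) ≤ 2 * ε}).toReal) :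
    Tendsto φ (nhdsWithin 0 (Set.Ioi 0)) (nhds 0)
    ∧ ∀ (Ω' : Type) (_ : MeasurableSpace Ω') (μ' : Measure Ω') (_ : IsProbabilityMeasure μ')
        (U Ut V : Ω' → (Fin d → ℝ)),
        Measurable U → Measurable Ut → Measurable V →
        Measure.map U μ' = Measure.map (window X d 0) μ →
        Measure.map Ut μ' = Measure.map (window X d 0) μ →
        Measure.map V μ' = Measure.map (window X d 0) μ →
        ((Measure.map (fun ω => (U ω, V ω)) μ'
            = (Measure.map (window X d 0) μ).prod (Measure.map (window X d 0) μ))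
          ∨ (∃ t : ℤ, 1 ≤ t ∧ Measure.map (fun ω => (U ω, V ω)) μ'
              = Measure.map (fun ω => (window X d 0 ω, window X d t ω)) μ)) →
        ∀ ε : ℝ, 0 < ε →
          ∫ ω, |(if pattern (U ω) = pattern (V ω) then (1 : ℝ) else 0)
                - (if pattern (Ut ω) = pattern (V ω) then (1 : ℝ) else 0)| ^ p
              * (if (∑ i, |U ω i - Ut ω i|) ≤ ε then (1 : ℝ) else 0) ∂μ' ≤ φ ε := by
  refine ⟨?_, fun Ω' _ μ' _ U Ut V hU _ _ hU_law _ _ _ ε hε => ?_⟩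
  · have h_double : Tendsto (fun ε : ℝ => 2 * ε) (𝓝[>] 0) (𝓝[>] 0) := by
      have h_maps : MapsTo (fun ε : ℝ => 2 * ε) (Ioi 0) (Ioi 0) :=
        fun ε (hε : 0 < ε) => show 0 < 2 * ε from mul_pos two_pos hε
      simpa using ((continuous_const_mul (2 : ℝ)).continuousWithinAt (x := 0)).tendsto_nhdsWithin
        h_maps
    simpa [funext hφ, measureReal_def] using
      ((tendsto_measureReal_minSpread_window_le_nhdsGT hXmeas hcont hd 1).comp h_double).const_mul
        (2 ^ p)
  calc _ ≤ (μ'.map U).real {x | minSpread x ≤ ε} :=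
        integral_abs_sub_ite_pattern_rpow_mul_le hd (by linarith) μ' hU ε
    _ ≤ (μ'.map U).real {x | minSpread x ≤ 2 * ε} :=
        measureReal_mono fun x (hx : minSpread x ≤ ε) => hx.trans (by linarith)
    _ = (μ {ω | minSpread (window X d 1 ω) ≤ 2 * ε}).toReal := by
        rw [hU_law, ← hstat.map_window hXmeas d 1,
          map_measureReal_apply (measurable_window hXmeas d 1) (measurableSet_minSpread_le hd _)]
        rfl
    _ ≤ φ ε := by
        rw [hφ]
        exact le_mul_of_one_le_left ENNReal.toReal_nonneg (Real.one_le_rpow one_le_two (by linarith))
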